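/- Sufficiency for QDQs of curves with one-sided derivatives: let f : ℝ → ℝ^m be a continuous curve admitting a left derivative f'(t̄⁻) and a right derivative f'(t̄⁺) at a point t̄ ∈ ℝ. Then any compact set Λ ⊆ Lin(ℝ, ℝ^m) ≅ ℝ^m that contains the image of some continuous path γ : [−1, 1] → Λ with γ(−1) = f'(t̄⁻) and γ(1) = f'(t̄⁺) is a Quasi Differential Quotient of f (regarded as the set-valued map t ⇝ {f(t)}) at (t̄, f(t̄)) in the direction of ℝ. -/

import Mathlib

open Metric Set Filter Topology

/-- A modulus: a non-decreasing non-negative function `ρ : [0,∞) → [0,∞)`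
with `ρ(δ) → 0` as `δ → 0⁺`. -/
def IsModulus (ρ : ℝ → ℝ) : Prop :=
  (∀ δ, 0 ≤ ρ δ) ∧ MonotoneOn ρ (Set.Ici 0) ∧
    Filter.Tendsto ρ (nhdsWithin 0 (Set.Ioi 0)) (nhds 0)

/-- `Λ` is a Quasi Differential Quotient (QDQ) of the set-valued map `Fm` at `(xb, yb)`
in the direction of `Γ`. -/
def IsQDQ {E F : Type*} [NormedAddCommGroup E] [NormedSpace ℝ E]
    [NormedAddCommGroup F] [NormedSpace ℝ F]
    (Fm : E → Set F) (xb : E) (yb : F) (Γ : Set E) (Λ : Set (E →L[ℝ] F)) : Prop :=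
  IsCompact Λ ∧
  ∃ δs : ℝ, 0 < δs ∧ ∃ ρ : ℝ → ℝ, IsModulus ρ ∧
    ∀ δ : ℝ, 0 < δ → δ < δs →
      ∃ (L : E → E →L[ℝ] F) (h : E → F),
        ContinuousOn (fun x => (L x, h x)) (Metric.closedBall xb δ ∩ Γ) ∧
        ∀ x ∈ Metric.closedBall xb δ ∩ Γ,
          Metric.infDist (L x) Λ ≤ ρ δ ∧ ‖h x‖ ≤ δ * ρ δ ∧
          yb + (L x) (x - xb) + h x ∈ Fm x

/-!
Near `tb` the curve satisfies `f (tb + s) = f tb + s • v s + o(|s|)`, where `v s` is the left or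
right derivative according to the sign of `s`. At scale `δ` take `L_δ t = γ (clamp ((t - tb) / δ²))`,
which is continuous because `γ` is a path in `Λ`. Where `|t - tb| ≥ δ²` it equals `v (t - tb)`, so
the remainder is `δ · o(1)`; on the window `|t - tb| < δ²` it is at most `δ · o(1) + δ² · diam Λ`.
Hence `ρ δ = o(1) + diam Λ · δ` is a modulus.
-/

lemma IsModulus.add {ρ₁ ρ₂ : ℝ → ℝ} (h₁ : IsModulus ρ₁) (h₂ : IsModulus ρ₂) :
    IsModulus (fun δ => ρ₁ δ + ρ₂ δ) :=
  ⟨fun δ => add_nonneg (h₁.1 δ) (h₂.1 δ), h₁.2.1.add h₂.2.1, by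
    simpa using h₁.2.2.add h₂.2.2⟩

lemma isModulus_const_mul_abs {c : ℝ} (hc : 0 ≤ c) : IsModulus (fun δ => c * |δ|) := by
  refine ⟨fun δ => by positivity, fun a (ha : 0 ≤ a) b (hb : 0 ≤ b) hab => ?_, ?_⟩
  · dsimp only
    rw [abs_of_nonneg ha, abs_of_nonneg hb]
    gcongr
  · have : Continuous fun δ : ℝ => c * |δ| := by fun_prop
    simpa using (this.tendsto 0).mono_left nhdsWithin_le_nhds

section PuncturedSup

variable {E : Type*} [NormedAddCommGroup E]

/-- Truncating at `1` keeps the supremum finite, so `sSup` never takes its junk value. -/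
noncomputable def puncturedSupModulus (q : ℝ → E) (δ : ℝ) : ℝ :=
  sSup ((fun s => min ‖q s‖ 1) '' (closedBall 0 δ \ {0}))

lemma puncturedSupModulus_nonneg (q : ℝ → E) (δ : ℝ) : 0 ≤ puncturedSupModulus q δ :=
  Real.sSup_nonneg <| by
    rintro _ ⟨s, -, rfl⟩
    positivity

lemma le_puncturedSupModulus (q : ℝ → E) {δ s : ℝ} (hs : s ≠ 0) (hsδ : |s| ≤ δ) :
    min ‖q s‖ 1 ≤ puncturedSupModulus q δ := by
  refine le_csSup ⟨1, ?_⟩ ⟨s, ⟨?_, hs⟩, rfl⟩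
  · rintro _ ⟨s, -, rfl⟩
    exact min_le_right _ _
  · rwa [mem_closedBall, dist_zero_right, Real.norm_eq_abs]

lemma puncturedSupModulus_le (q : ℝ → E) {δ ε : ℝ} (hε : 0 ≤ ε)
    (h : ∀ s, s ≠ 0 → |s| ≤ δ → ‖q s‖ ≤ ε) : puncturedSupModulus q δ ≤ ε := by
  refine Real.sSup_le ?_ hε
  rintro _ ⟨s, ⟨hsδ, hs⟩, rfl⟩
  rw [mem_closedBall, dist_zero_right, Real.norm_eq_abs] at hsδ
  exact (min_le_left _ _).trans (h s hs hsδ)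

lemma isModulus_puncturedSupModulus {q : ℝ → E} (hq : Tendsto q (𝓝[≠] 0) (𝓝 0)) :
    IsModulus (puncturedSupModulus q) := by
  refine ⟨puncturedSupModulus_nonneg q, fun a _ b _ hab => ?_, ?_⟩
  · refine Real.sSup_le ?_ (puncturedSupModulus_nonneg q b)
    rintro _ ⟨s, ⟨hsa, hs⟩, rfl⟩
    exact le_puncturedSupModulus q hs ((mem_closedBall_zero_iff.mp hsa).trans hab)
  · rw [Metric.tendsto_nhdsWithin_nhds] at hq ⊢
    intro ε hε
    obtain ⟨d, hd, hqd⟩ := hq (ε / 2) (half_pos hε)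
    refine ⟨d, hd, fun {δ} _ hδ => ?_⟩
    rw [Real.dist_eq, sub_zero] at hδ
    have hle : puncturedSupModulus q δ ≤ ε / 2 := by
      refine puncturedSupModulus_le q (half_pos hε).le fun s hs hsδ => ?_
      have := hqd (mem_compl_singleton_iff.mpr hs) (by
        rw [Real.dist_eq, sub_zero]; exact hsδ.trans_lt ((le_abs_self δ).trans_lt hδ))
      rw [dist_zero_right] at this
      exact this.le
    rw [Real.dist_eq, sub_zero, abs_lt]
    constructor <;> linarith [puncturedSupModulus_nonneg q δ]

lemma exists_isModulus_norm_le_of_tendsto {q : ℝ → E} (hq : Tendsto q (𝓝[≠] 0) (𝓝 0)) :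
    ∃ δs > 0, ∃ ρ, IsModulus ρ ∧ ∀ δ s, δ < δs → s ≠ 0 → |s| ≤ δ → ‖q s‖ ≤ ρ δ := by
  obtain ⟨δs, hδs, hq1⟩ := Metric.tendsto_nhdsWithin_nhds.mp hq 1 one_pos
  refine ⟨δs, hδs, puncturedSupModulus q, isModulus_puncturedSupModulus hq,
    fun δ s hδ hs hsδ => ?_⟩
  have h1 : ‖q s‖ < 1 := by
    simpa using hq1 (mem_compl_singleton_iff.mpr hs) (by simpa [Real.dist_eq] using hsδ.trans_lt hδ)
  simpa [min_eq_left h1.le] using le_puncturedSupModulus q hs hsδ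

end PuncturedSup

lemma ContinuousOn.exists_continuous_extend_Icc {α X : Type*} [LinearOrder α] [TopologicalSpace α]
    [OrderTopology α] [TopologicalSpace X] {a b : α} (hab : a ≤ b) {γ : α → X}
    (hγ : ContinuousOn γ (Icc a b)) :
    ∃ g : α → X, Continuous g ∧ range g = γ '' Icc a b ∧ (∀ x ≤ a, g x = γ a) ∧
      ∀ x, b ≤ x → g x = γ b :=
  ⟨IccExtend hab ((Icc a b).domRestrict γ),
    (continuousOn_iff_continuous_domRestrict.mp hγ).Icc_extend',
    by rw [IccExtend_range, range_domRestrict],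
    fun _ hx => IccExtend_of_le_left _ _ hx, fun _ hx => IccExtend_of_right_le _ _ hx⟩

section Curve

variable {E : Type*} [NormedAddCommGroup E] [NormedSpace ℝ E]

theorem exists_isModulus_norm_sub_smul_le {f : ℝ → E} {tb : ℝ} {vminus vplus : E}
    (hminus : Tendsto (fun s : ℝ => s⁻¹ • (f (tb + s) - f tb)) (𝓝[<] 0) (𝓝 vminus))
    (hplus : Tendsto (fun s : ℝ => s⁻¹ • (f (tb + s) - f tb)) (𝓝[>] 0) (𝓝 vplus)) :
    ∃ δs > 0, ∃ ρ, IsModulus ρ ∧ ∀ δ s, δ < δs → |s| ≤ δ →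
      ‖f (tb + s) - f tb - s • (if s < 0 then vminus else vplus)‖ ≤ δ * ρ δ := by
  set v : ℝ → E := fun s => if s < 0 then vminus else vplus
  set q : ℝ → E := fun s => s⁻¹ • (f (tb + s) - f tb) - v s
  have hq : Tendsto q (𝓝[≠] 0) (𝓝 0) := by
    rw [← nhdsLT_sup_nhdsGT, tendsto_sup]
    constructor
    · have := hminus.sub_const vminus
      rw [sub_self] at this
      refine this.congr' (eventually_nhdsWithin_of_forall fun s (hs : s < 0) => ?_)
      simp [q, v, hs]
    · have := hplus.sub_const vplus
      rw [sub_self] at this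
      refine this.congr' (eventually_nhdsWithin_of_forall fun s (hs : 0 < s) => ?_)
      simp [q, v, hs.not_gt]
  obtain ⟨δs, hδs, ρ, hρ, hqρ⟩ := exists_isModulus_norm_le_of_tendsto hq
  refine ⟨δs, hδs, ρ, hρ, fun δ s hδ hsδ => ?_⟩
  rcases eq_or_ne s 0 with rfl | hs
  · simpa using mul_nonneg ((abs_nonneg 0).trans hsδ) (hρ.1 δ)
  · have : f (tb + s) - f tb - s • v s = s • q s := by
      simp [q, smul_sub, smul_inv_smul₀ hs]
    rw [this, norm_smul, Real.norm_eq_abs]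
    exact mul_le_mul hsδ (hqρ δ s hδ hs hsδ) (norm_nonneg _) ((abs_nonneg s).trans hsδ)

lemma norm_sub_smul_comp_div_le {f g : ℝ → E} {tb δ ε η D s : ℝ} {vminus vplus : E}
    (hfv : ‖f (tb + s) - f tb - s • (if s < 0 then vminus else vplus)‖ ≤ δ * ε)
    (hgm : ∀ x ≤ -1, g x = vminus) (hgp : ∀ x, 1 ≤ x → g x = vplus)
    (hD : ∀ x y, ‖g x - g y‖ ≤ D) (hη : 0 < η) :
    ‖f (tb + s) - f tb - s • g (s / η)‖ ≤ δ * ε + η * D := by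
  set v := if s < 0 then vminus else vplus
  have hvg : ∃ x, v = g x := by
    by_cases hs : s < 0
    · exact ⟨-1, by simp [v, hs, hgm]⟩
    · exact ⟨1, by simp [v, hs, hgp]⟩
  have hv : |s| * ‖v - g (s / η)‖ ≤ η * D := by
    obtain ⟨x, hx⟩ := hvg
    rcases lt_or_ge |s| η with hsη | hηs
    · exact mul_le_mul hsη.le (hx ▸ hD _ _) (norm_nonneg _) hη.le
    · have : g (s / η) = v := by
        rcases lt_or_ge s 0 with hs | hs
        · simp only [v, if_pos hs]
          apply hgm
          rw [div_le_iff₀ hη]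
          linarith [abs_of_neg hs]
        · simp only [v, if_neg hs.not_gt]
          apply hgp
          rw [le_div_iff₀ hη]
          linarith [abs_of_nonneg hs]
      rw [this, sub_self, norm_zero, mul_zero]
      exact mul_nonneg hη.le ((norm_nonneg _).trans (hD x x))
  calc ‖f (tb + s) - f tb - s • g (s / η)‖
      = ‖(f (tb + s) - f tb - s • v) + s • (v - g (s / η))‖ := by
        rw [smul_sub, sub_add_sub_cancel]
    _ ≤ ‖f (tb + s) - f tb - s • v‖ + |s| * ‖v - g (s / η)‖ := by
        rw [← Real.norm_eq_abs, ← norm_smul]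
        exact norm_add_le _ _
    _ ≤ δ * ε + η * D := add_le_add hfv hv

theorem isQDQ_curve_of_approx {f : ℝ → E} (hf : Continuous f) (tb : ℝ) {Λv : Set E}
    (hΛv : IsCompact Λv) {δs : ℝ} (hδs : 0 < δs) {ρ : ℝ → ℝ} (hρ : IsModulus ρ)
    (happrox : ∀ δ, 0 < δ → δ < δs → ∃ g : ℝ → E, Continuous g ∧ (∀ t, g t ∈ Λv) ∧
      ∀ t, |t - tb| ≤ δ → ‖f t - f tb - (t - tb) • g t‖ ≤ δ * ρ δ) :
    IsQDQ (fun t => {f t}) tb (f tb) univ ((fun v => (1 : ℝ →L[ℝ] ℝ).smulRight v) '' Λv) := by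
  have hcont : Continuous fun v : E => (1 : ℝ →L[ℝ] ℝ).smulRight v :=
    (ContinuousLinearMap.smulRightL ℝ ℝ E 1).continuous
  refine ⟨hΛv.image hcont, δs, hδs, ρ, hρ, fun δ hδ hδδs => ?_⟩
  obtain ⟨g, hg, hgΛ, hgf⟩ := happrox δ hδ hδδs
  refine ⟨fun t => (1 : ℝ →L[ℝ] ℝ).smulRight (g t), fun t => f t - f tb - (t - tb) • g t,
    ((hcont.comp hg).prodMk (by fun_prop)).continuousOn, ?_⟩
  rintro t ⟨ht, -⟩
  refine ⟨?_, hgf t ?_, ?_⟩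
  · rw [infDist_zero_of_mem (mem_image_of_mem _ (hgΛ t))]
    exact hρ.1 δ
  · rwa [mem_closedBall, Real.dist_eq] at ht
  · simp only [ContinuousLinearMap.smulRight_apply, one_apply_eq_self,
      mem_singleton_iff]
    abel

end Curve

/-- Sufficiency for QDQs of curves: any compact set of vectors containing a path
connecting the one-sided derivatives is a QDQ of the curve. -/
theorem curve_qdq_of_path {m : ℕ}
    (f : ℝ → EuclideanSpace ℝ (Fin m)) (hf : Continuous f) (tb : ℝ)
    (vminus vplus : EuclideanSpace ℝ (Fin m))
    (hminus : Filter.Tendsto (fun s : ℝ => s⁻¹ • (f (tb + s) - f tb))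
      (nhdsWithin 0 (Set.Iio 0)) (nhds vminus))
    (hplus : Filter.Tendsto (fun s : ℝ => s⁻¹ • (f (tb + s) - f tb))
      (nhdsWithin 0 (Set.Ioi 0)) (nhds vplus))
    (Λv : Set (EuclideanSpace ℝ (Fin m))) (hΛv : IsCompact Λv)
    (γ : ℝ → EuclideanSpace ℝ (Fin m))
    (hγ : ContinuousOn γ (Set.Icc (-1 : ℝ) 1))
    (hγminus : γ (-1) = vminus) (hγplus : γ 1 = vplus)
    (hγΛ : γ '' Set.Icc (-1 : ℝ) 1 ⊆ Λv) :
    IsQDQ (fun t => {f t}) tb (f tb) Set.univ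
      ((fun v => (1 : ℝ →L[ℝ] ℝ).smulRight v) '' Λv) := by
  obtain ⟨δs, hδs, ρ, hρ, hTaylor⟩ := exists_isModulus_norm_sub_smul_le hminus hplus
  obtain ⟨g, hg, hgrange, hgm, hgp⟩ := hγ.exists_continuous_extend_Icc (by norm_num)
  rw [hγminus] at hgm
  rw [hγplus] at hgp
  have hgΛ : ∀ t, g t ∈ Λv := fun t => hγΛ (hgrange ▸ mem_range_self t)
  obtain ⟨D, hD⟩ := Metric.isBounded_iff.mp hΛv.isBounded
  have hD0 : 0 ≤ D := (dist_self (g 0)).symm.trans_le (hD (hgΛ 0) (hgΛ 0))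
  refine isQDQ_curve_of_approx hf tb hΛv hδs (hρ.add (isModulus_const_mul_abs hD0))
    fun δ hδ hδδs => ⟨fun t => g ((t - tb) / δ ^ 2), by fun_prop, fun t => hgΛ _, fun t ht => ?_⟩
  have hgD : ∀ x y, ‖g x - g y‖ ≤ D := fun x y => dist_eq_norm (g x) (g y) ▸ hD (hgΛ x) (hgΛ y)
  have key := norm_sub_smul_comp_div_le (hTaylor δ (t - tb) hδδs ht) hgm hgp hgD
    (by positivity : 0 < δ ^ 2)
  rw [add_sub_cancel] at key
  refine key.trans_eq ?_
  rw [abs_of_pos hδ]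
  ring
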